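/- Let E = {0} ∪ ⋃_{k=1}^∞ [2^{−2k+1}, 2^{−2k+2}] ⊆ ℝ and let X = E × [0,1] ⊆ ℝ². Consider the ten similarity maps g_{1,j}(x,y) = ((x, y+j))/4 for j = 0,1,2,3, g_{2,j}(x,y) = ((x+2, y+j))/4 for j = 0,1,2,3, and g_{3,j}(x,y) = ((x+1, y+j))/2 for j = 0,1. Then X = ⋃ over these ten maps g of g(X) (so X is a self-similar set), and this iterated function system satisfies the open set condition: there exists a nonempty open set U ⊆ ℝ² such that the ten images g(U) are pairwise disjoint and all contained in U. -/

import Mathlib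

/-- `E = {0} ∪ ⋃_{k≥1} [2^{-2k+1}, 2^{-2k+2}] ⊆ ℝ`. -/
def setE : Set ℝ :=
  insert 0 (⋃ k : ℕ, Set.Icc ((2 : ℝ) ^ (-2 * ((k : ℤ) + 1) + 1)) ((2 : ℝ) ^ (-2 * ((k : ℤ) + 1) + 2)))

/-- The ten similarity maps `g_{1,j}(x,y) = ((x, y+j))/4` (`j = 0,1,2,3`),
`g_{2,j}(x,y) = ((x+2, y+j))/4` (`j = 0,1,2,3`), `g_{3,j}(x,y) = ((x+1, y+j))/2`
(`j = 0,1`). -/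
noncomputable def gmaps : Fin 10 → (ℝ × ℝ) → ℝ × ℝ :=
  ![fun p => (p.1 / 4, (p.2 + 0) / 4),
    fun p => (p.1 / 4, (p.2 + 1) / 4),
    fun p => (p.1 / 4, (p.2 + 2) / 4),
    fun p => (p.1 / 4, (p.2 + 3) / 4),
    fun p => ((p.1 + 2) / 4, (p.2 + 0) / 4),
    fun p => ((p.1 + 2) / 4, (p.2 + 1) / 4),
    fun p => ((p.1 + 2) / 4, (p.2 + 2) / 4),
    fun p => ((p.1 + 2) / 4, (p.2 + 3) / 4),
    fun p => ((p.1 + 1) / 2, (p.2 + 0) / 2),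
    fun p => ((p.1 + 1) / 2, (p.2 + 1) / 2)]

/-!
`E` is `{0}` together with the blocks `4⁻ᵏ [1/2, 1]`. Every `t ∈ [0, 1]` lies in a block up to a
factor 2 (`t ∈ E` or `2 t ∈ E`), which gives `E = E/4 ∪ (E+2)/4 ∪ (E+1)/2`; cutting `[0, 1]` into
quarters or halves then gives the self-similarity of `E × [0, 1]`.

For the open set condition take `U = V × (0, 1)` with `V = ⋃ₖ 4⁻ᵏ (1/2, 1)`, invariant under the
three horizontal maps. The images under `g_{1,j}` lie left of `x = 1/4`, the others right of
`x = 1/2`; maps sharing the horizontal part are separated by the second coordinate; and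
`g_{2,j}(U) ∩ g_{3,j'}(U) = ∅` because `(x + 2)/4 = (x' + 1)/2` means `x = 2 x'`, while
`V ∩ 2 V = ∅`.
-/

open Set

def quarterOrbit (J : Set ℝ) : Set ℝ := {x | ∃ k : ℕ, 4 ^ k * x ∈ J}

lemma subset_quarterOrbit (J : Set ℝ) : J ⊆ quarterOrbit J :=
  fun x hx => ⟨0, by simpa using hx⟩

lemma mapsTo_div_four_quarterOrbit (J : Set ℝ) :
    MapsTo (· / 4) (quarterOrbit J) (quarterOrbit J) := by
  rintro x ⟨k, hk⟩
  exact ⟨k + 1, by rwa [pow_succ, mul_assoc, mul_div_cancel₀ x four_ne_zero]⟩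

lemma isOpen_quarterOrbit {J : Set ℝ} (hJ : IsOpen J) : IsOpen (quarterOrbit J) := by
  rw [quarterOrbit, ofPred_exists]
  exact isOpen_iUnion fun k => hJ.preimage (continuous_const_mul _)

lemma quarterOrbit_subset_Icc {J : Set ℝ} (hJ : J ⊆ Icc 0 1) : quarterOrbit J ⊆ Icc 0 1 := by
  rintro x ⟨k, hk⟩
  have h4 : (1 : ℝ) ≤ 4 ^ k := one_le_pow₀ (by norm_num)
  have hx : 0 ≤ x := nonneg_of_mul_nonneg_right (hJ hk).1 (by positivity)
  exact ⟨hx, (le_mul_of_one_le_left hx h4).trans (hJ hk).2⟩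

lemma quarterOrbit_subset_Ioo {J : Set ℝ} (hJ : J ⊆ Ioo 0 1) : quarterOrbit J ⊆ Ioo 0 1 := by
  rintro x ⟨k, hk⟩
  have h4 : (1 : ℝ) ≤ 4 ^ k := one_le_pow₀ (by norm_num)
  have hx : 0 < x := pos_of_mul_pos_right (hJ hk).1 (by positivity)
  exact ⟨hx, (le_mul_of_one_le_left hx.le h4).trans_lt (hJ hk).2⟩

lemma two_mul_notMem_quarterOrbit_Ioo {x : ℝ} (hx : x ∈ quarterOrbit (Ioo (1 / 2) 1)) :
    2 * x ∉ quarterOrbit (Ioo (1 / 2) 1) := by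
  rintro ⟨m, hm₁, hm₂⟩
  obtain ⟨k, hk₁, hk₂⟩ := hx
  have hx : 0 < x := pos_of_mul_pos_right (by linarith) (by positivity)
  rcases le_or_gt k m with hkm | hmk
  · have : 4 ^ k * x ≤ 4 ^ m * x := by gcongr; norm_num
    linarith
  · have : 4 ^ (m + 1) * x ≤ 4 ^ k * x := by gcongr; exacts [by norm_num, hmk]
    rw [pow_succ] at this
    linarith

lemma mem_setE_iff {x : ℝ} : x ∈ setE ↔ x = 0 ∨ x ∈ quarterOrbit (Icc (1 / 2) 1) := by
  have h4 (k : ℕ) : (0 : ℝ) < 4 ^ k := by positivity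
  have hlo (k : ℕ) : (2 : ℝ) ^ (-2 * ((k : ℤ) + 1) + 1) = 1 / 2 / 4 ^ k := by
    rw [show -2 * ((k : ℤ) + 1) + 1 = -((2 * k + 1 : ℕ) : ℤ) by push_cast; ring, zpow_neg,
      zpow_natCast, pow_succ, pow_mul]
    norm_num [div_eq_mul_inv]
  have hhi (k : ℕ) : (2 : ℝ) ^ (-2 * ((k : ℤ) + 1) + 2) = 1 / 4 ^ k := by
    rw [show -2 * ((k : ℤ) + 1) + 2 = -((2 * k : ℕ) : ℤ) by push_cast; ring, zpow_neg,
      zpow_natCast, pow_mul]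
    norm_num
  simp only [setE, quarterOrbit, mem_insert_iff, mem_iUnion, mem_Icc, mem_ofPred_eq, hlo, hhi,
    div_le_iff₀' (h4 _), le_div_iff₀' (h4 _)]

lemma setE_subset_Icc : setE ⊆ Icc 0 1 := by
  intro x hx
  rcases mem_setE_iff.1 hx with rfl | hx
  · exact ⟨le_rfl, zero_le_one⟩
  · exact quarterOrbit_subset_Icc (Icc_subset_Icc (by norm_num) le_rfl) hx

lemma Icc_half_one_subset_setE : Icc (1 / 2) 1 ⊆ setE :=
  fun _ hx => mem_setE_iff.2 (Or.inr (subset_quarterOrbit _ hx))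

lemma mapsTo_div_four_setE : MapsTo (· / 4) setE setE := by
  intro x hx
  rcases mem_setE_iff.1 hx with rfl | hx
  · exact mem_setE_iff.2 (Or.inl (zero_div 4))
  · exact mem_setE_iff.2 (Or.inr (mapsTo_div_four_quarterOrbit _ hx))

lemma mapsTo_add_two_div_four_setE : MapsTo (fun x => (x + 2) / 4) setE setE := by
  intro x hx
  obtain ⟨hx₀, hx₁⟩ := setE_subset_Icc hx
  exact Icc_half_one_subset_setE ⟨by linarith, by linarith⟩

lemma mapsTo_add_one_div_two_setE : MapsTo (fun x => (x + 1) / 2) setE setE := by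
  intro x hx
  obtain ⟨hx₀, hx₁⟩ := setE_subset_Icc hx
  exact Icc_half_one_subset_setE ⟨by linarith, by linarith⟩

lemma mem_setE_or_two_mul_mem_setE {t : ℝ} (ht : t ∈ Icc (0 : ℝ) 1) :
    t ∈ setE ∨ 2 * t ∈ setE := by
  rcases ht.1.eq_or_lt with rfl | ht₀
  · exact Or.inl (mem_setE_iff.2 (Or.inl rfl))
  -- the dyadic scale `2⁻ⁿ⁻¹ < t ≤ 2⁻ⁿ` of `t`: its parity decides between `t` and `2 * t`
  obtain ⟨n, hn₁, hn₂⟩ := exists_nat_pow_near (one_le_inv₀ ht₀ |>.2 ht.2) one_lt_two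
  have h₁ : 2 ^ n * t ≤ 1 := by simpa [ht₀.ne'] using mul_le_mul_of_nonneg_right hn₁ ht₀.le
  have h₂ : 1 < 2 ^ (n + 1) * t := by simpa [ht₀.ne'] using mul_lt_mul_of_pos_right hn₂ ht₀
  have h4 (k : ℕ) : (2 : ℝ) ^ (2 * k) = 4 ^ k := by rw [pow_mul]; norm_num
  obtain ⟨k, rfl | rfl⟩ := Nat.even_or_odd' n
  · rw [h4] at h₁
    rw [pow_succ, h4] at h₂
    exact Or.inl (mem_setE_iff.2 (Or.inr ⟨k, by linarith, h₁⟩))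
  · rw [pow_succ, h4] at h₁
    rw [pow_succ, pow_succ, h4] at h₂
    exact Or.inr (mem_setE_iff.2 (Or.inr ⟨k, by linarith, by linarith⟩))

lemma setE_eq_union : setE = (· / 4) '' setE ∪ (fun x => (x + 2) / 4) '' setE ∪
    (fun x => (x + 1) / 2) '' setE := by
  refine Subset.antisymm (fun x hx => ?_) (union_subset (union_subset
    mapsTo_div_four_setE.image_subset mapsTo_add_two_div_four_setE.image_subset)
    mapsTo_add_one_div_two_setE.image_subset)
  rcases mem_setE_iff.1 hx with rfl | ⟨_ | k, hk⟩
  · exact Or.inl (Or.inl ⟨0, hx, zero_div 4⟩)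
  · rw [pow_zero, one_mul] at hk
    have ht : 2 * x - 1 ∈ Icc (0 : ℝ) 1 := ⟨by linarith [hk.1], by linarith [hk.2]⟩
    rcases mem_setE_or_two_mul_mem_setE ht with ht | ht
    · exact Or.inr ⟨_, ht, by ring⟩
    · exact Or.inl (Or.inr ⟨_, ht, by ring⟩)
  · refine Or.inl (Or.inl ⟨4 * x, mem_setE_iff.2 (Or.inr ⟨k, ?_⟩), by ring⟩)
    rwa [← mul_assoc, ← pow_succ]

lemma quarterOrbit_Ioo_half_one_subset : quarterOrbit (Ioo (1 / 2) 1) ⊆ Ioo 0 1 :=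
  quarterOrbit_subset_Ioo (Ioo_subset_Ioo (by norm_num) le_rfl)

lemma mapsTo_add_two_div_four_quarterOrbit_Ioo :
    MapsTo (fun x => (x + 2) / 4) (quarterOrbit (Ioo (1 / 2) 1))
      (quarterOrbit (Ioo (1 / 2) 1)) := by
  intro x hx
  obtain ⟨hx₀, hx₁⟩ := quarterOrbit_Ioo_half_one_subset hx
  exact subset_quarterOrbit _ ⟨by linarith, by linarith⟩

lemma mapsTo_add_one_div_two_quarterOrbit_Ioo :
    MapsTo (fun x => (x + 1) / 2) (quarterOrbit (Ioo (1 / 2) 1))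
      (quarterOrbit (Ioo (1 / 2) 1)) := by
  intro x hx
  obtain ⟨hx₀, hx₁⟩ := quarterOrbit_Ioo_half_one_subset hx
  exact subset_quarterOrbit _ ⟨by linarith, by linarith⟩

section UnitInterval

variable {n j : ℕ}

lemma mapsTo_add_div_Icc (hj : j < n) :
    MapsTo (fun y : ℝ => (y + j) / n) (Icc 0 1) (Icc 0 1) := by
  rintro y ⟨hy₀, hy₁⟩
  have hj' : (j : ℝ) + 1 ≤ n := by exact_mod_cast hj
  have hj₀ : (0 : ℝ) ≤ j := j.cast_nonneg
  have hn : (0 : ℝ) < n := by linarith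
  exact ⟨div_nonneg (by linarith) hn.le, (div_le_one hn).2 (by linarith)⟩

lemma mapsTo_add_div_Ioo (hj : j < n) :
    MapsTo (fun y : ℝ => (y + j) / n) (Ioo 0 1) (Ioo 0 1) := by
  rintro y ⟨hy₀, hy₁⟩
  have hj' : (j : ℝ) + 1 ≤ n := by exact_mod_cast hj
  have hj₀ : (0 : ℝ) ≤ j := j.cast_nonneg
  have hn : (0 : ℝ) < n := by linarith
  exact ⟨div_pos (by linarith) hn, (div_lt_one hn).2 (by linarith)⟩

lemma exists_add_div_eq_of_mem_Icc (hn : 0 < n) {y : ℝ} (hy : y ∈ Icc (0 : ℝ) 1) :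
    ∃ j < n, ∃ t ∈ Icc (0 : ℝ) 1, (t + j) / n = y := by
  have hn' : (0 : ℝ) < n := by exact_mod_cast hn
  rcases hy.2.eq_or_lt with rfl | hy₁
  · refine ⟨n - 1, by omega, 1, right_mem_Icc.2 zero_le_one, ?_⟩
    rw [Nat.cast_pred hn, add_sub_cancel, div_self hn'.ne']
  have hny : 0 ≤ n * y := mul_nonneg hn'.le hy.1
  refine ⟨⌊n * y⌋₊, (Nat.floor_lt hny).2 (by nlinarith), n * y - ⌊n * y⌋₊,
    ⟨sub_nonneg.2 (Nat.floor_le hny), by linarith [Nat.lt_floor_add_one (n * y)]⟩, ?_⟩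
  field_simp
  ring

lemma eq_of_add_natCast_div_eq {t t' r : ℝ} {a b : ℕ} (ht : t ∈ Ico (0 : ℝ) 1)
    (ht' : t' ∈ Ico (0 : ℝ) 1) (hr : r ≠ 0) (h : (t + a) / r = (t' + b) / r) : a = b := by
  have floor_eq (s : ℝ) (hs : s ∈ Ico (0 : ℝ) 1) (c : ℕ) : ⌊s + c⌋₊ = c := by
    rw [Nat.floor_add_natCast hs.1, Nat.floor_eq_zero.2 hs.2, zero_add]
  rw [← floor_eq t ht a, (div_left_inj' hr).1 h, floor_eq t' ht' b]

end UnitInterval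

lemma gmaps_of_lt_four {i : Fin 10} (hi : (i : ℕ) < 4) (p : ℝ × ℝ) :
    gmaps i p = (p.1 / 4, (p.2 + (i : ℕ)) / 4) := by
  fin_cases i <;> simp at hi ⊢ <;> simp [gmaps]

lemma gmaps_of_four_le_of_lt_eight {i : Fin 10} (h₄ : 4 ≤ (i : ℕ)) (h₈ : (i : ℕ) < 8)
    (p : ℝ × ℝ) : gmaps i p = ((p.1 + 2) / 4, (p.2 + ((i : ℕ) - 4 : ℕ)) / 4) := by
  fin_cases i <;> simp at h₄ h₈ ⊢ <;> simp [gmaps]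

lemma gmaps_of_eight_le {i : Fin 10} (h₈ : 8 ≤ (i : ℕ)) (p : ℝ × ℝ) :
    gmaps i p = ((p.1 + 1) / 2, (p.2 + ((i : ℕ) - 8 : ℕ)) / 2) := by
  fin_cases i <;> simp at h₈ ⊢ <;> simp [gmaps]

lemma mapsTo_gmaps {A B : Set ℝ} (hA₁ : MapsTo (· / 4) A A)
    (hA₂ : MapsTo (fun x => (x + 2) / 4) A A) (hA₃ : MapsTo (fun x => (x + 1) / 2) A A)
    (hB : ∀ n j : ℕ, j < n → MapsTo (fun y : ℝ => (y + j) / n) B B) (i : Fin 10) :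
    MapsTo (gmaps i) (A ×ˢ B) (A ×ˢ B) := by
  rintro ⟨x, y⟩ ⟨hx, hy⟩
  rcases lt_or_ge (i : ℕ) 4 with h₄ | h₄
  · rw [gmaps_of_lt_four h₄]
    exact ⟨hA₁ hx, hB 4 _ h₄ hy⟩
  rcases lt_or_ge (i : ℕ) 8 with h₈ | h₈
  · rw [gmaps_of_four_le_of_lt_eight h₄ h₈]
    exact ⟨hA₂ hx, hB 4 _ (by omega) hy⟩
  · rw [gmaps_of_eight_le h₈]
    exact ⟨hA₃ hx, hB 2 _ (by omega) hy⟩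

lemma prod_subset_iUnion_image_gmaps :
    setE ×ˢ Icc (0 : ℝ) 1 ⊆ ⋃ i, gmaps i '' (setE ×ˢ Icc (0 : ℝ) 1) := by
  rintro ⟨x, y⟩ ⟨hx, hy⟩
  rw [setE_eq_union] at hx
  rcases hx with (⟨x, hx, rfl⟩ | ⟨x, hx, rfl⟩) | ⟨x, hx, rfl⟩
  · obtain ⟨j, hj, t, ht, rfl⟩ := exists_add_div_eq_of_mem_Icc four_pos hy
    exact mem_iUnion.2 ⟨⟨j, by omega⟩, (x, t), ⟨hx, ht⟩, gmaps_of_lt_four hj _⟩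
  · obtain ⟨j, hj, t, ht, rfl⟩ := exists_add_div_eq_of_mem_Icc four_pos hy
    refine mem_iUnion.2 ⟨⟨4 + j, by omega⟩, (x, t), ⟨hx, ht⟩, ?_⟩
    rw [gmaps_of_four_le_of_lt_eight (by dsimp only; omega) (by dsimp only; omega)]
    simp
  · obtain ⟨j, hj, t, ht, rfl⟩ := exists_add_div_eq_of_mem_Icc two_pos hy
    refine mem_iUnion.2 ⟨⟨8 + j, by omega⟩, (x, t), ⟨hx, ht⟩, ?_⟩
    rw [gmaps_of_eight_le (by dsimp only; omega)]
    simp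

lemma disjoint_image_gmaps {i i' : Fin 10} (hii' : i ≠ i') :
    Disjoint (gmaps i '' (quarterOrbit (Ioo (1 / 2) 1) ×ˢ Ioo 0 1))
      (gmaps i' '' (quarterOrbit (Ioo (1 / 2) 1) ×ˢ Ioo 0 1)) := by
  wlog hlt : i < i' generalizing i i'
  · exact (this hii'.symm (hii'.lt_or_gt.resolve_left hlt)).symm
  refine disjoint_image_image fun ⟨x, y⟩ ⟨hx, hy⟩ ⟨x', y'⟩ ⟨hx', hy'⟩ heq => ?_
  obtain ⟨hx₀, hx₁⟩ := quarterOrbit_Ioo_half_one_subset hx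
  obtain ⟨hx₀', hx₁'⟩ := quarterOrbit_Ioo_half_one_subset hx'
  replace hy := Ioo_subset_Ico_self hy
  replace hy' := Ioo_subset_Ico_self hy'
  have hlt : (i : ℕ) < i' := hlt
  rcases lt_or_ge (i : ℕ) 4 with h₄ | h₄
  · rw [gmaps_of_lt_four h₄] at heq
    rcases lt_or_ge (i' : ℕ) 4 with h₄' | h₄'
    · rw [gmaps_of_lt_four h₄', Prod.mk.injEq] at heq
      exact hlt.ne (eq_of_add_natCast_div_eq hy hy' four_ne_zero heq.2)
    rcases lt_or_ge (i' : ℕ) 8 with h₈' | h₈'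
    · rw [gmaps_of_four_le_of_lt_eight h₄' h₈', Prod.mk.injEq] at heq
      linarith [heq.1]
    · rw [gmaps_of_eight_le h₈', Prod.mk.injEq] at heq
      linarith [heq.1]
  rcases lt_or_ge (i : ℕ) 8 with h₈ | h₈
  · rw [gmaps_of_four_le_of_lt_eight h₄ h₈] at heq
    rcases lt_or_ge (i' : ℕ) 8 with h₈' | h₈'
    · rw [gmaps_of_four_le_of_lt_eight (by omega) h₈', Prod.mk.injEq] at heq
      have := eq_of_add_natCast_div_eq hy hy' four_ne_zero heq.2
      omega
    · rw [gmaps_of_eight_le h₈', Prod.mk.injEq] at heq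
      exact two_mul_notMem_quarterOrbit_Ioo hx' (by convert hx using 1; linarith [heq.1])
  · rw [gmaps_of_eight_le h₈, gmaps_of_eight_le (by omega), Prod.mk.injEq] at heq
    have := eq_of_add_natCast_div_eq hy hy' two_ne_zero heq.2
    omega

theorem X_self_similar_with_OSC :
    setE ×ˢ Set.Icc (0 : ℝ) 1 = ⋃ i : Fin 10, gmaps i '' (setE ×ˢ Set.Icc (0 : ℝ) 1)
    ∧ ∃ U : Set (ℝ × ℝ), U.Nonempty ∧ IsOpen U
        ∧ (∀ i : Fin 10, gmaps i '' U ⊆ U)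
        ∧ (∀ i j : Fin 10, i ≠ j → Disjoint (gmaps i '' U) (gmaps j '' U)) := by
  have hX := mapsTo_gmaps mapsTo_div_four_setE mapsTo_add_two_div_four_setE
    mapsTo_add_one_div_two_setE fun _ _ => mapsTo_add_div_Icc
  have hU := mapsTo_gmaps (mapsTo_div_four_quarterOrbit _)
    mapsTo_add_two_div_four_quarterOrbit_Ioo mapsTo_add_one_div_two_quarterOrbit_Ioo
    fun _ _ => mapsTo_add_div_Ioo
  refine ⟨prod_subset_iUnion_image_gmaps.antisymm (iUnion_subset fun i => (hX i).image_subset),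
    quarterOrbit (Ioo (1 / 2) 1) ×ˢ Ioo 0 1, ?_, (isOpen_quarterOrbit isOpen_Ioo).prod isOpen_Ioo,
    fun i => (hU i).image_subset, fun _ _ => disjoint_image_gmaps⟩
  exact ⟨(3 / 4, 1 / 2), subset_quarterOrbit _ ⟨by norm_num, by norm_num⟩, by norm_num, by norm_num⟩
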